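/- arXiv:math/9912194 — 2 statements merged into one kernel-verified Lean document; each statement's English description precedes it below -/
import Mathlib

section
/- Let β be a Pisot unit with minimal polynomial g(x) = x^m − k₁x^{m−1} − ⋯ − k_m. For each ξ ∈ P_β, define T(n) to be the integer nearest to ξβⁿ. Then the sequence T eventually satisfies the linear recurrence associated with g: there exists j such that T(n+m) = k₁T(n+m−1) + k₂T(n+m−2) + ⋯ + k_m T(n) for all n ≥ j. -/
open Filter Polynomial

/-- Distance from a real number to the nearest integer. -/
noncomputable def nearestIntDist (y : ℝ) : ℝ := |y - (round y : ℤ)|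

/-- `P_β = {ξ ∈ ℝ : ‖ξ βⁿ‖ → 0 as n → +∞}`. -/
def PisotSet (β : ℝ) : Set ℝ :=
  {ξ : ℝ | Filter.Tendsto (fun n : ℕ => nearestIntDist (ξ * β ^ n)) Filter.atTop (nhds 0)}

/-- `β` is a Pisot unit. -/
def IsPisotUnit (β : ℝ) : Prop :=
  1 < β ∧ IsIntegral ℤ β ∧
    (∀ z : ℂ, ((minpoly ℤ β).map (Int.castRingHom ℂ)).IsRoot z → z ≠ (β : ℂ) →
      ‖z‖ < 1) ∧
    ((minpoly ℤ β).coeff 0 = 1 ∨ (minpoly ℤ β).coeff 0 = -1)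

/-! If `g = ∑ cᵢ xⁱ` is the minimal polynomial of `β`, then `∑ cᵢ ξβ^(n+i) = ξβⁿ g(β) = 0`.
For `ξ ∈ P_β` each `ξβ^(n+i)` differs from its rounding by `o(1)`, so the integer
`∑ cᵢ round(ξβ^(n+i))` tends to `0` and hence eventually vanishes. Since `g` is monic this
is the recurrence. -/

open Topology

theorem Polynomial.sum_coeff_mul_mul_pow_add_eq_zero {R A : Type*} [CommSemiring R]
    [CommSemiring A] [Algebra R A] {p : R[X]} {x : A} (hx : aeval x p = 0) (c : A) (n : ℕ) :
    ∑ i ∈ Finset.range (p.natDegree + 1), algebraMap R A (p.coeff i) * (c * x ^ (n + i)) = 0 :=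
  calc _ = c * x ^ n * ∑ i ∈ Finset.range (p.natDegree + 1), p.coeff i • x ^ i := by
        rw [Finset.mul_sum]
        exact Finset.sum_congr rfl fun i _ => by rw [Algebra.smul_def, pow_add]; ring
    _ = 0 := by rw [← aeval_eq_sum_range, hx, mul_zero]

theorem eventually_eq_zero_of_tendsto_intCast {α : Type*} {l : Filter α} {u : α → ℤ}
    (hu : Tendsto (fun a => (u a : ℝ)) l (𝓝 0)) : ∀ᶠ a in l, u a = 0 := by
  rw [← Int.cast_zero] at hu
  simpa [nhds_discrete] using Int.isClosedEmbedding_coe_real.tendsto_nhds_iff.mpr hu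

theorem eventually_sum_mul_round_eq_zero {α ι : Type*} {l : Filter α} {s : Finset ι}
    (w : ι → ℤ) (r : α → ι → ℝ) (hsum : ∀ a, ∑ i ∈ s, (w i : ℝ) * r a i = 0)
    (hround : ∀ i ∈ s, Tendsto (fun a => r a i - round (r a i)) l (𝓝 0)) :
    ∀ᶠ a in l, ∑ i ∈ s, w i * round (r a i) = 0 := by
  apply eventually_eq_zero_of_tendsto_intCast
  have hcast : ∀ a, ((∑ i ∈ s, w i * round (r a i) : ℤ) : ℝ) =
      -∑ i ∈ s, (w i : ℝ) * (r a i - round (r a i)) := fun a => by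
    simp only [mul_sub, Finset.sum_sub_distrib, hsum, Int.cast_sum, Int.cast_mul]
    ring
  simp only [hcast]
  simpa using (tendsto_finsetSum s fun i hi => (hround i hi).const_mul (w i : ℝ)).neg

theorem tendsto_sub_round_of_mem_pisotSet {β ξ : ℝ} (hξ : ξ ∈ PisotSet β) (k : ℕ) :
    Tendsto (fun n : ℕ => ξ * β ^ (n + k) - round (ξ * β ^ (n + k))) atTop (𝓝 0) :=
  (tendsto_zero_iff_abs_tendsto_zero _).mpr (hξ.comp (tendsto_add_atTop_nat k))

/-- for `ξ ∈ P_β`, the sequence `T(n) = round(ξβⁿ)` of nearest integers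
eventually satisfies the linear recurrence of the minimal polynomial
`g(x) = x^m - k₁x^{m-1} - ⋯ - k_m` of `β` (here `k_{m-i} = -g.coeff i`). -/
theorem round_pisotSet_satisfies_recurrence (β : ℝ) (hβ : IsPisotUnit β)
    (ξ : ℝ) (hξ : ξ ∈ PisotSet β) :
    ∃ j : ℕ, ∀ n ≥ j,
      round (ξ * β ^ (n + (minpoly ℤ β).natDegree)) =
        -∑ i ∈ Finset.range (minpoly ℤ β).natDegree,
          (minpoly ℤ β).coeff i * round (ξ * β ^ (n + i)) := by
  set g := minpoly ℤ β
  have hg : g.Monic := minpoly.monic hβ.2.1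
  have hcomb := eventually_sum_mul_round_eq_zero (s := Finset.range (g.natDegree + 1))
    g.coeff (fun n i => ξ * β ^ (n + i))
    (fun n => by simpa using sum_coeff_mul_mul_pow_add_eq_zero (minpoly.aeval ℤ β) ξ n)
    (fun i _ => tendsto_sub_round_of_mem_pisotSet hξ i)
  obtain ⟨j, hj⟩ := eventually_atTop.mp hcomb
  refine ⟨j, fun n hn => ?_⟩
  have h := hj n hn
  rw [Finset.sum_range_succ, hg.coeff_natDegree, one_mul] at h
  linarith
end

section
/- Let k be a positive integer and ε ∈ {+1, −1}, with k ≥ 1 if ε = +1 and k ≥ 3 if ε = −1. Let β = (k + √(k²+4ε))/2 be the larger root of x² = kx + ε (a quadratic Pisot unit) and set D = k² + 4ε. Then P_β = (1/√D)·ℤ[β]; that is, for ξ ∈ ℝ one has ξ ∈ P_β if and only if √D·ξ ∈ ℤ[β]. -/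
open Filter Polynomial

open Topology

/-! The conjugate `γ = k - β` satisfies `β γ = -ε` and `|γ| < 1 < |β|`, and `√D = β - γ`.
If `ξ ∈ P_β`, the integers `c n` nearest to `ξ βⁿ` eventually satisfy
`c (n + 2) = k c (n + 1) + ε c n`, because the defect is an integer tending to `0`. Binet's formula
then writes `c (N + m) = A β^m + B γ^m`, and comparing with `ξ β^(N + m)` (using `|β| > 1`) forces
`√D ξ β^N = c (N + 1) - γ c N ∈ ℤ[β]`; finally `β⁻¹ = -ε γ ∈ ℤ[β]`.
Conversely, if `√D ξ = a + b β`, the integer solution `c` of the recurrence with `c 0 = b`,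
`c 1 = a + b k` satisfies `ξ βⁿ - c n = (a + b γ) γⁿ / √D → 0`. -/

theorem mem_pisotSet_iff_exists_tendsto {β ξ : ℝ} :
    ξ ∈ PisotSet β ↔ ∃ c : ℕ → ℤ, Tendsto (fun n => ξ * β ^ n - c n) atTop (𝓝 0) := by
  refine ⟨fun h => ⟨fun n => round (ξ * β ^ n), (tendsto_zero_iff_abs_tendsto_zero _).2 h⟩,
    fun ⟨c, hc⟩ => ?_⟩
  exact squeeze_zero (fun n => abs_nonneg _) (fun n => round_le _ (c n))
    ((tendsto_zero_iff_abs_tendsto_zero _).1 hc)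

theorem Int.eventually_eq_zero_of_tendsto_cast {α : Type*} {l : Filter α} {f : α → ℤ}
    (hf : Tendsto (fun a => (f a : ℝ)) l (𝓝 0)) : ∀ᶠ a in l, f a = 0 := by
  have : Tendsto f l (𝓝 0) := by
    rw [Int.isClosedEmbedding_coe_real.tendsto_nhds_iff]
    simpa [Function.comp_def] using hf
  simpa [nhds_discrete] using this

theorem eq_zero_of_tendsto_mul_pow {β x : ℝ} (hβ : 1 < |β|)
    (h : Tendsto (fun n : ℕ => x * β ^ n) atTop (𝓝 0)) : x = 0 := by
  have hβ0 : β ≠ 0 := by rintro rfl; norm_num at hβ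
  have hinv : Tendsto (fun n : ℕ => β⁻¹ ^ n) atTop (𝓝 0) :=
    tendsto_pow_atTop_nhds_zero_of_abs_lt_one (by rw [abs_inv]; exact inv_lt_one_of_one_lt₀ hβ)
  have := h.mul hinv
  simp only [mul_assoc, ← mul_pow, mul_inv_cancel₀ hβ0, one_pow, mul_one, mul_zero] at this
  exact tendsto_nhds_unique tendsto_const_nhds this

theorem sub_mul_eq_binet {R : Type*} [CommRing R] {k e β γ : R} (hk : β + γ = k)
    (he : β * γ = -e) {u : ℕ → R} (hu : ∀ n, u (n + 2) = k * u (n + 1) + e * u n) (n : ℕ) :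
    (β - γ) * u n = (u 1 - γ * u 0) * β ^ n - (u 1 - β * u 0) * γ ^ n := by
  induction n using Nat.twoStepInduction with
  | zero => ring
  | one => ring
  | more n ih₀ ih₁ =>
    obtain rfl : e = -(β * γ) := by rw [he, neg_neg]
    subst hk
    rw [hu]
    linear_combination (β + γ) * ih₁ - β * γ * ih₀

def secondOrderRec (k e x y : ℤ) : ℕ → ℤ
  | 0 => x
  | 1 => y
  | n + 2 => k * secondOrderRec k e x y (n + 1) + e * secondOrderRec k e x y n

theorem exists_int_add_mul_of_mem_closure {k e : ℤ} {β x : ℝ} (hβ : β ^ 2 = k * β + e)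
    (hx : x ∈ Subring.closure ({β} : Set ℝ)) : ∃ a b : ℤ, x = a + b * β := by
  induction hx using Subring.closure_induction with
  | mem x hx => exact ⟨0, 1, by simp [Set.mem_singleton_iff.1 hx]⟩
  | zero => exact ⟨0, 0, by simp⟩
  | one => exact ⟨1, 0, by simp⟩
  | add x y _ _ hx hy =>
    obtain ⟨a, b, rfl⟩ := hx
    obtain ⟨c, d, rfl⟩ := hy
    exact ⟨a + c, b + d, by push_cast; ring⟩
  | neg x _ hx =>
    obtain ⟨a, b, rfl⟩ := hx
    exact ⟨-a, -b, by push_cast; ring⟩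
  | mul x y _ _ hx hy =>
    obtain ⟨a, b, rfl⟩ := hx
    obtain ⟨c, d, rfl⟩ := hy
    exact ⟨a * c + e * (b * d), a * d + b * c + k * (b * d), by
      push_cast; linear_combination (b * d : ℝ) * hβ⟩

section QuadraticUnit

variable {k e : ℤ} {β γ ξ : ℝ}

theorem sq_eq_of_add_eq_of_mul_eq (hk : β + γ = k) (hprod : β * γ = -e) : β ^ 2 = k * β + e := by
  linear_combination β * hk - hprod

theorem one_lt_abs_of_mul_eq_neg_unit (hprod : β * γ = -e) (he : e = 1 ∨ e = -1)
    (hγ : |γ| < 1) : 1 < |β| := by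
  have h : |β| * |γ| = 1 := by
    rw [← abs_mul, hprod]
    rcases he with rfl | rfl <;> norm_num
  nlinarith [abs_nonneg β, abs_nonneg γ]

theorem eventually_rec_of_tendsto (hβ : β ^ 2 = k * β + e) {c : ℕ → ℤ}
    (hc : Tendsto (fun n => ξ * β ^ n - c n) atTop (𝓝 0)) :
    ∀ᶠ n in atTop, c (n + 2) = k * c (n + 1) + e * c n := by
  have hres : Tendsto (fun n => ((c (n + 2) - k * c (n + 1) - e * c n : ℤ) : ℝ)) atTop (𝓝 0) := by
    have := ((hc.comp (tendsto_add_atTop_nat 2)).neg.add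
      ((hc.comp (tendsto_add_atTop_nat 1)).const_mul (k : ℝ))).add (hc.const_mul (e : ℝ))
    simp only [neg_zero, mul_zero, add_zero] at this
    refine this.congr fun n => ?_
    simp only [Function.comp_apply]
    push_cast
    linear_combination -ξ * β ^ n * hβ
  filter_upwards [Int.eventually_eq_zero_of_tendsto_cast hres] with n hn
  linarith

theorem sub_mul_mul_pow_eq_of_rec (hk : β + γ = k) (hprod : β * γ = -e) (hβ : 1 < |β|)
    (hγ : |γ| < 1) {c : ℕ → ℤ} (hc : Tendsto (fun n => ξ * β ^ n - c n) atTop (𝓝 0)) {N : ℕ}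
    (hN : ∀ n ≥ N, c (n + 2) = k * c (n + 1) + e * c n) :
    (β - γ) * ξ * β ^ N = c (N + 1) - γ * c N := by
  have hbinet := sub_mul_eq_binet (u := fun m => (c (N + m) : ℝ)) hk hprod fun m => by
    simp only [← add_assoc]
    exact_mod_cast hN (N + m) (Nat.le_add_right N m)
  simp only [add_zero] at hbinet
  refine sub_eq_zero.1 (eq_zero_of_tendsto_mul_pow hβ ?_)
  have := ((hc.comp (tendsto_add_atTop_nat N)).const_mul (β - γ)).sub
    ((tendsto_pow_atTop_nhds_zero_of_abs_lt_one hγ).const_mul ((c (N + 1) : ℝ) - β * c N))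
  simp only [mul_zero, sub_zero] at this
  refine this.congr fun m => ?_
  simp only [Function.comp_apply, add_comm m N]
  linear_combination (-1 : ℝ) * hbinet m

theorem sub_mul_mem_closure_of_mem_pisotSet (hk : β + γ = k) (hprod : β * γ = -e)
    (he : e = 1 ∨ e = -1) (hγ : |γ| < 1) (hξ : ξ ∈ PisotSet β) :
    (β - γ) * ξ ∈ Subring.closure ({β} : Set ℝ) := by
  obtain ⟨c, hc⟩ := mem_pisotSet_iff_exists_tendsto.1 hξ
  obtain ⟨N, hN⟩ := eventually_atTop.1
    (eventually_rec_of_tendsto (sq_eq_of_add_eq_of_mul_eq hk hprod) hc)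
  have hA := sub_mul_mul_pow_eq_of_rec hk hprod (one_lt_abs_of_mul_eq_neg_unit hprod he hγ) hγ
    hc hN
  have hunit : β * -(e * γ) = 1 := by
    have he2 : (e : ℝ) ^ 2 = 1 := by rcases he with rfl | rfl <;> norm_num
    linear_combination -(e : ℝ) * hprod + he2
  have hξ_eq : (β - γ) * ξ = (c (N + 1) - γ * c N) * (-(e * γ)) ^ N := by
    rw [← hA, mul_assoc, ← mul_pow, hunit, one_pow, mul_one]
  have hβS : β ∈ Subring.closure ({β} : Set ℝ) := Subring.subset_closure rfl
  have hγS : γ ∈ Subring.closure ({β} : Set ℝ) := by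
    rw [eq_sub_of_add_eq' hk]
    exact sub_mem (intCast_mem _ k) hβS
  rw [hξ_eq]
  exact mul_mem (sub_mem (intCast_mem _ _) (mul_mem hγS (intCast_mem _ _)))
    (pow_mem (neg_mem (mul_mem (intCast_mem _ _) hγS)) _)

theorem mem_pisotSet_of_sub_mul_mem_closure (hk : β + γ = k) (hprod : β * γ = -e)
    (he : e = 1 ∨ e = -1) (hγ : |γ| < 1) (hξ : (β - γ) * ξ ∈ Subring.closure ({β} : Set ℝ)) :
    ξ ∈ PisotSet β := by
  have hs : β - γ ≠ 0 := by
    have := one_lt_abs_of_mul_eq_neg_unit hprod he hγ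
    intro h
    rw [sub_eq_zero.1 h] at this
    linarith
  obtain ⟨a, b, hab⟩ := exists_int_add_mul_of_mem_closure (sq_eq_of_add_eq_of_mul_eq hk hprod) hξ
  set c := secondOrderRec k e b (a + b * k)
  have hbinet := sub_mul_eq_binet (u := fun n => (c n : ℝ)) hk hprod fun n => by
    simp only [c, secondOrderRec]
    push_cast
    ring
  refine mem_pisotSet_iff_exists_tendsto.2 ⟨c, ?_⟩
  have := (tendsto_pow_atTop_nhds_zero_of_abs_lt_one hγ).const_mul ((a + b * γ) / (β - γ))
  rw [mul_zero] at this
  refine this.congr fun n => ?_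
  have hn := hbinet n
  simp only [c, secondOrderRec] at hn
  push_cast at hn
  field_simp
  linear_combination -(β ^ n * hab - hn + b * (β ^ n - γ ^ n) * hk)

theorem mem_pisotSet_iff_sub_mul_mem_closure (hk : β + γ = k) (hprod : β * γ = -e)
    (he : e = 1 ∨ e = -1) (hγ : |γ| < 1) :
    ξ ∈ PisotSet β ↔ (β - γ) * ξ ∈ Subring.closure ({β} : Set ℝ) :=
  ⟨sub_mul_mem_closure_of_mem_pisotSet hk hprod he hγ,
    mem_pisotSet_of_sub_mul_mem_closure hk hprod he hγ⟩

end QuadraticUnit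

theorem abs_sub_sqrt_sq_add_four_mul_lt_two (k e : ℤ) (he : e = 1 ∨ e = -1)
    (hk1 : e = 1 → 1 ≤ k) (hk2 : e = -1 → 3 ≤ k) :
    0 < (k : ℝ) ^ 2 + 4 * e ∧ |(k : ℝ) - √((k : ℝ) ^ 2 + 4 * e)| < 2 := by
  have hlow : 1 - k < e ∧ e ≤ 1 := by
    rcases he with rfl | rfl
    · have := hk1 rfl; omega
    · have := hk2 rfl; omega
  have hlow' : (1 : ℝ) - k < e ∧ (e : ℝ) ≤ 1 := by exact_mod_cast hlow
  have hD : 0 < (k : ℝ) ^ 2 + 4 * e := by nlinarith [sq_nonneg ((k : ℝ) - 2)]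
  have hs := Real.sq_sqrt hD.le
  have hs0 := Real.sqrt_nonneg ((k : ℝ) ^ 2 + 4 * e)
  have hupper := abs_lt_of_sq_lt_sq' (a := √((k : ℝ) ^ 2 + 4 * e)) (b := k + 2)
    (by nlinarith) (by linarith)
  have hlower := abs_lt_of_sq_lt_sq' (a := (k : ℝ) - 2) (by nlinarith) hs0
  exact ⟨hD, abs_lt.2 ⟨by linarith, by linarith⟩⟩

/-- for a quadratic Pisot unit `β = (k + √(k²+4ε))/2`, the larger root of
`x² = kx + ε` (with `k ≥ 1` if `ε = 1` and `k ≥ 3` if `ε = -1`), and `D = k² + 4ε`,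
one has `P_β = (1/√D)·ℤ[β]`, i.e. `ξ ∈ P_β ↔ √D·ξ ∈ ℤ[β]`. -/
theorem quadratic_pisotSet_eq_inv_sqrtD_smul (k e : ℤ) (he : e = 1 ∨ e = -1)
    (hk1 : e = 1 → 1 ≤ k) (hk2 : e = -1 → 3 ≤ k)
    (β : ℝ) (hβ : β = ((k : ℝ) + Real.sqrt ((k : ℝ) ^ 2 + 4 * (e : ℝ))) / 2)
    (ξ : ℝ) :
    ξ ∈ PisotSet β ↔
      Real.sqrt (((k ^ 2 + 4 * e : ℤ) : ℝ)) * ξ ∈ Subring.closure ({β} : Set ℝ) := by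
  obtain ⟨hD, hγ⟩ := abs_sub_sqrt_sq_add_four_mul_lt_two k e he hk1 hk2
  have hs := Real.sq_sqrt hD.le
  have hsβ : √(((k ^ 2 + 4 * e : ℤ) : ℝ)) = β - (k - β) := by
    push_cast
    rw [hβ]
    ring
  rw [hsβ]
  refine mem_pisotSet_iff_sub_mul_mem_closure (by ring) ?_ he ?_
  · rw [hβ]
    linear_combination -hs / 4
  · rw [show (k : ℝ) - β = ((k : ℝ) - √((k : ℝ) ^ 2 + 4 * e)) / 2 by rw [hβ]; ring,
      abs_div, abs_two]
    linarith
end
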